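/- arXiv:1812.09224 — 2 statements merged into one kernel-verified Lean document; each statement's English description precedes it below -/
import Mathlib

section
/- Let 𝒞 = ⋃_{k=1}^ℓ B̄(y_k, s) be a nondegenerate geometric complex in ℝ^d, let Z be a topological space, and let 0 < r < R. Then ∫_{B(0,R−r)} 𝒩(𝒞, B(x, r); [Z]) / Vol(B(0,r)) dx ≤ 𝒩(𝒞, B(0,R); [Z]) ≤ ∫_{B(0,R+r)} 𝒩*(𝒞, B(x, r); [Z]) / Vol(B(0,r)) dx, where the integrals are with respect to Lebesgue measure in x. -/
open Metric MeasureTheory Filter Topology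

noncomputable section

/-- Euclidean space `ℝ^d`. -/
abbrev Euc (d : ℕ) := EuclideanSpace ℝ (Fin d)

/-- `C` is a connected component of `Y` (with the subspace topology), viewed as a
subset of the ambient space. -/
def IsCompOf {d : ℕ} (Y C : Set (Euc d)) : Prop :=
  ∃ x ∈ Y, C = connectedComponentIn Y x

/-- The number of connected components of `Y₁` contained in the interior of `Y₂`. -/
noncomputable def compCount {d : ℕ} (Y₁ Y₂ : Set (Euc d)) : ℕ :=
  {C : Set (Euc d) | IsCompOf Y₁ C ∧ C ⊆ interior Y₂}.ncard

/-- The number of connected components of `Y₁` contained in the interior of `Y₂`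
and homotopy equivalent to `Z`. -/
noncomputable def compCountType {d : ℕ} (Y₁ Y₂ : Set (Euc d))
    (Z : Type*) [TopologicalSpace Z] : ℕ :=
  {C : Set (Euc d) | IsCompOf Y₁ C ∧ C ⊆ interior Y₂ ∧
    Nonempty (ContinuousMap.HomotopyEquiv C Z)}.ncard

/-- The number of connected components of `Y₁` intersecting `Y₂`
and homotopy equivalent to `Z`. -/
noncomputable def compCountTypeStar {d : ℕ} (Y₁ Y₂ : Set (Euc d))
    (Z : Type*) [TopologicalSpace Z] : ℕ :=
  {C : Set (Euc d) | IsCompOf Y₁ C ∧ (C ∩ Y₂).Nonempty ∧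
    Nonempty (ContinuousMap.HomotopyEquiv C Z)}.ncard

/-- The number of connected components of `Y₁` intersecting `Y₂`. -/
noncomputable def compCountStar {d : ℕ} (Y₁ Y₂ : Set (Euc d)) : ℕ :=
  {C : Set (Euc d) | IsCompOf Y₁ C ∧ (C ∩ Y₂).Nonempty}.ncard

/-- A geometric complex in `ℝ^d`: a finite union of closed balls of a common radius. -/
def IsGeomComplex {d : ℕ} (Z : Set (Euc d)) : Prop :=
  ∃ (ℓ : ℕ) (y : Fin ℓ → Euc d) (r : ℝ), 0 < r ∧ Z = ⋃ k, closedBall (y k) r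

/-- Nondegeneracy of the family of closed balls of radius `s` centered at `y 1, …, y ℓ`. -/
def Nondeg {d ℓ : ℕ} (y : Fin ℓ → Euc d) (s : ℝ) : Prop :=
  ∀ J : Finset (Fin ℓ), J.Nonempty → ∀ x : Euc d,
    (∀ j ∈ J, dist x (y j) = s) →
      LinearIndependent ℝ (fun j : J => x - y (j : Fin ℓ))

/-- A nondegenerate geometric complex in `ℝ^d`. -/
def IsNondegGeomComplex {d : ℕ} (Z : Set (Euc d)) : Prop :=
  ∃ (ℓ : ℕ) (y : Fin ℓ → Euc d) (r : ℝ), 0 < r ∧ Z = ⋃ k, closedBall (y k) r ∧ Nondeg y r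

/-- A unit-intensity Poisson point process on `ℝ^d`, defined on the probability
space `(Ω, ℙ)`. -/
structure PoissonPP (d : ℕ) {Ω : Type*} [MeasurableSpace Ω] (ℙ : Measure Ω) where
  /-- the random set of points -/
  pts : Ω → Set (Euc d)
  /-- the point set is locally finite -/
  locFin : ∀ ω : Ω, ∀ s : Set (Euc d), Bornology.IsBounded s → (pts ω ∩ s).Finite
  /-- the number of points in a finite-volume Borel set is Poisson distributed with
  mean the volume of the set -/
  poisson : ∀ A : Set (Euc d), MeasurableSet A → volume A ≠ ⊤ → ∀ k : ℕ,
    ℙ {ω | (pts ω ∩ A).ncard = k} =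
      ENNReal.ofReal
        (Real.exp (-(volume A).toReal) * (volume A).toReal ^ k / (Nat.factorial k))
  /-- the numbers of points in finitely many pairwise disjoint Borel sets are independent -/
  indep : ∀ (n : ℕ) (A : Fin n → Set (Euc d)), (∀ i, MeasurableSet (A i)) →
    (∀ i, volume (A i) ≠ ⊤) → Pairwise (Function.onFun Disjoint A) →
    ProbabilityTheory.iIndepFun
      (fun i ω => ((pts ω ∩ A i).ncard : ℕ)) ℙ

/-- The closed `α`-neighborhood of a point set `P`: the union of closed balls of
radius `α` centered at the points of `P`. -/
def nbhd {d : ℕ} (P : Set (Euc d)) (α : ℝ) : Set (Euc d) := ⋃ p ∈ P, closedBall p α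

end

/-!
Every component of the complex is compact and nonempty, and there are finitely many of them, so
both integrands are finite sums over the components `C` of type `[Z]` of indicator functions in
`x`. After integrating, `C` contributes on the left the volume of `{x ∈ B(0, R - r) | C ⊆ B(x, r)}`:
this set lies in `B(p, r)` for any `p ∈ C`, and it is empty unless `C ⊆ B(0, R)`. On the right
`C` contributes the volume of its open `r`-thickening inside `B(0, R + r)`, which contains `B(p, r)`
as soon as `p ∈ C ∩ B(0, R)`.
-/

open Finset

lemma IsCompact.isOpen_setOf_subset_ball {X : Type*} [PseudoMetricSpace X] {K : Set X}
    (hK : IsCompact K) (r : ℝ) : IsOpen {x | K ⊆ ball x r} := by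
  refine isOpen_iff_eventually.2 fun x₀ hx₀ =>
    hK.eventually_forall_of_forall_eventually fun p hp => ?_
  exact (continuous_snd.dist continuous_fst).continuousAt.eventually_lt continuousAt_const
    (hx₀ hp)

lemma mem_thickening_iff_inter_ball_nonempty {X : Type*} [PseudoMetricSpace X] {K : Set X}
    {r : ℝ} {x : X} : x ∈ thickening r K ↔ (K ∩ ball x r).Nonempty := by
  simp only [mem_thickening_iff, Set.Nonempty, Set.mem_inter_iff, mem_ball, dist_comm]

open scoped Classical in
theorem setIntegral_card_filter_mem {X ι : Type*} [MeasurableSpace X] (μ : Measure X)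
    {s : Set X} (hs : μ s ≠ ⊤) (𝒮 : Finset ι) {A : ι → Set X}
    (hA : ∀ i ∈ 𝒮, MeasurableSet (A i)) :
    ∫ x in s, (#{i ∈ 𝒮 | x ∈ A i} : ℝ) ∂μ = ∑ i ∈ 𝒮, μ.real (A i ∩ s) := by
  have : IsFiniteMeasure (μ.restrict s) := isFiniteMeasure_restrict.2 hs
  have hcard (x : X) : (#{i ∈ 𝒮 | x ∈ A i} : ℝ) = ∑ i ∈ 𝒮, (A i).indicator 1 x := by
    simp only [natCast_card_filter, Set.indicator_apply, Pi.one_apply]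
  simp_rw [hcard]
  rw [integral_finsetSum _ fun i hi =>
    (integrable_indicator_iff (hA i hi)).2 integrableOn_const]
  exact sum_congr rfl fun i hi =>
    (integral_indicator_one (hA i hi)).trans (measureReal_restrict_apply (hA i hi))

section Sandwich

variable {E : Type*} [NormedAddCommGroup E] [ProperSpace E] [MeasurableSpace E] [BorelSpace E]
  (μ : Measure E) [μ.IsAddHaarMeasure]

lemma measureReal_setOf_subset_ball_inter_le {K : Set E} (hK : K.Nonempty) (r : ℝ)
    (s : Set E) : μ.real ({x | K ⊆ ball x r} ∩ s) ≤ μ.real (ball (0 : E) r) := by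
  obtain ⟨p, hp⟩ := hK
  rw [← Measure.addHaar_real_ball_center μ p]
  exact measureReal_mono (fun x hx => mem_ball_comm.1 (hx.1 hp)) measure_ball_lt_top.ne

lemma measureReal_ball_le_thickening_inter_ball {K : Set E} {c p : E} {r R : ℝ} (hp : p ∈ K)
    (hpc : p ∈ ball c R) : μ.real (ball (0 : E) r) ≤ μ.real (thickening r K ∩ ball c (R + r)) := by
  rw [← Measure.addHaar_real_ball_center μ p]
  refine measureReal_mono (fun x hx => ⟨?_, ?_⟩)
    ((measure_mono Set.inter_subset_right).trans_lt measure_ball_lt_top).ne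
  · exact mem_thickening_iff.2 ⟨p, hp, mem_ball.1 hx⟩
  · exact ball_subset_ball' (by rw [mem_ball] at hpc; linarith) hx

open scoped Classical in
theorem setIntegral_card_subset_ball_le (𝒮 : Finset (Set E))
    (h𝒮 : ∀ K ∈ 𝒮, IsCompact K ∧ K.Nonempty) (c : E) (r R : ℝ) :
    ∫ x in ball c (R - r), (#{K ∈ 𝒮 | K ⊆ ball x r} : ℝ) ∂μ
      ≤ #{K ∈ 𝒮 | K ⊆ ball c R} * μ.real (ball (0 : E) r) := by
  have hint := setIntegral_card_filter_mem μ (measure_ball_lt_top (x := c) (r := R - r)).ne 𝒮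
    (A := fun K => {x | K ⊆ ball x r})
    fun K hK => ((h𝒮 K hK).1.isOpen_setOf_subset_ball r).measurableSet
  simp only [Set.mem_ofPred_eq] at hint
  rw [hint, ← nsmul_eq_mul, ← sum_const, sum_filter]
  refine sum_le_sum fun K hK => ?_
  split_ifs with hKc
  · exact measureReal_setOf_subset_ball_inter_le μ (h𝒮 K hK).2 r _
  · have hempty : {x | K ⊆ ball x r} ∩ ball c (R - r) = ∅ :=
      Set.eq_empty_of_forall_notMem fun x ⟨hx, hxc⟩ =>
        hKc (hx.trans (ball_subset_ball' (by rw [mem_ball] at hxc; linarith)))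
    simp [hempty]

open scoped Classical in
theorem card_mul_le_setIntegral_card_inter_ball_nonempty (𝒮 : Finset (Set E))
    (h𝒮 : ∀ K ∈ 𝒮, K.Nonempty) (c : E) (r R : ℝ) :
    #{K ∈ 𝒮 | K ⊆ ball c R} * μ.real (ball (0 : E) r)
      ≤ ∫ x in ball c (R + r), (#{K ∈ 𝒮 | (K ∩ ball x r).Nonempty} : ℝ) ∂μ := by
  simp_rw [← mem_thickening_iff_inter_ball_nonempty]
  rw [setIntegral_card_filter_mem μ (measure_ball_lt_top (x := c) (r := R + r)).ne 𝒮
    fun K _ => isOpen_thickening.measurableSet, ← nsmul_eq_mul, ← sum_const]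
  refine (sum_le_sum fun K hK => ?_).trans
    (sum_le_sum_of_subset_of_nonneg (filter_subset _ _) fun _ _ _ => measureReal_nonneg)
  obtain ⟨p, hp⟩ := h𝒮 K (mem_filter.1 hK).1
  exact measureReal_ball_le_thickening_inter_ball μ hp ((mem_filter.1 hK).2 hp)

end Sandwich

section Components

variable {d : ℕ}

lemma finite_setOf_isCompOf_iUnion {ι : Type*} [Finite ι] {A : ι → Set (Euc d)}
    (hA : ∀ i, IsPreconnected (A i)) : {C | IsCompOf (⋃ i, A i) C}.Finite := by
  refine (Set.finite_iUnion fun i =>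
    (?_ : (connectedComponentIn (⋃ i, A i) '' A i).Subsingleton).finite).subset ?_
  · rintro _ ⟨x, hx, rfl⟩ _ ⟨x', hx', rfl⟩
    exact connectedComponentIn_eq
      ((hA i).subset_connectedComponentIn hx (Set.subset_iUnion A i) hx')
  · rintro C ⟨x, hx, rfl⟩
    obtain ⟨i, hi⟩ := Set.mem_iUnion.1 hx
    exact Set.mem_iUnion.2 ⟨i, x, hi, rfl⟩

lemma IsCompOf.nonempty {Y C : Set (Euc d)} (h : IsCompOf Y C) : C.Nonempty := by
  obtain ⟨x, hx, rfl⟩ := h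
  exact ⟨x, mem_connectedComponentIn hx⟩

lemma IsCompOf.isCompact {Y C : Set (Euc d)} (h : IsCompOf Y C) (hY : IsCompact Y) :
    IsCompact C := by
  obtain ⟨x, hx, rfl⟩ := h
  have : CompactSpace Y := isCompact_iff_compactSpace.1 hY
  rw [connectedComponentIn_eq_image hx]
  exact isClosed_connectedComponent.isCompact.image continuous_subtype_val

def compsOfType (Y : Set (Euc d)) (Z : Type*) [TopologicalSpace Z] : Set (Set (Euc d)) :=
  {C | IsCompOf Y C ∧ Nonempty (ContinuousMap.HomotopyEquiv C Z)}

open scoped Classical in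
lemma compCountType_ball_eq_card_filter {Y : Set (Euc d)} {Z : Type*} [TopologicalSpace Z]
    (h : (compsOfType Y Z).Finite) (x : Euc d) (r : ℝ) :
    compCountType Y (ball x r) Z = #{C ∈ h.toFinset | C ⊆ ball x r} := by
  rw [compCountType, ← Set.ncard_coe_finset]
  congr 1
  ext C
  simp only [coe_filter, Set.Finite.mem_toFinset, compsOfType, isOpen_ball.interior_eq,
    Set.mem_ofPred_eq]
  tauto

open scoped Classical in
lemma compCountTypeStar_ball_eq_card_filter {Y : Set (Euc d)} {Z : Type*} [TopologicalSpace Z]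
    (h : (compsOfType Y Z).Finite) (x : Euc d) (r : ℝ) :
    compCountTypeStar Y (ball x r) Z = #{C ∈ h.toFinset | (C ∩ ball x r).Nonempty} := by
  rw [compCountTypeStar, ← Set.ncard_coe_finset]
  congr 1
  ext C
  simp only [coe_filter, Set.Finite.mem_toFinset, compsOfType, Set.mem_ofPred_eq]
  tauto

end Components

theorem stmt_1_general {d ℓ : ℕ} (y : Fin ℓ → Euc d) (s : ℝ) (Z : Type*) [TopologicalSpace Z]
    (r R : ℝ) (hr : 0 < r) :
    (∫ x in ball (0 : Euc d) (R - r),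
        (compCountType (⋃ k, closedBall (y k) s) (ball x r) Z : ℝ)
          / (volume (ball (0 : Euc d) r)).toReal)
      ≤ (compCountType (⋃ k, closedBall (y k) s) (ball (0 : Euc d) R) Z : ℝ) ∧
    (compCountType (⋃ k, closedBall (y k) s) (ball (0 : Euc d) R) Z : ℝ)
      ≤ ∫ x in ball (0 : Euc d) (R + r),
          (compCountTypeStar (⋃ k, closedBall (y k) s) (ball x r) Z : ℝ)
            / (volume (ball (0 : Euc d) r)).toReal := by
  set Y := ⋃ k, closedBall (y k) s
  have hY : IsCompact Y := isCompact_iUnion fun k => isCompact_closedBall _ _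
  have hfin : (compsOfType Y Z).Finite :=
    (finite_setOf_isCompOf_iUnion fun k => (convex_closedBall (y k) s).isPreconnected).subset
      fun _ hC => hC.1
  have hcomps : ∀ C ∈ hfin.toFinset, IsCompact C ∧ C.Nonempty := fun C hC =>
    have hC := (hfin.mem_toFinset.1 hC).1
    ⟨hC.isCompact hY, hC.nonempty⟩
  have hV : 0 < volume.real (ball (0 : Euc d) r) :=
    ENNReal.toReal_pos (measure_ball_pos volume 0 hr).ne' measure_ball_lt_top.ne
  simp_rw [← measureReal_def, integral_div, compCountType_ball_eq_card_filter hfin,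
    compCountTypeStar_ball_eq_card_filter hfin, div_le_iff₀ hV, le_div_iff₀ hV]
  exact ⟨setIntegral_card_subset_ball_le volume _ hcomps 0 r R,
    card_mul_le_setIntegral_card_inter_ball_nonempty volume _ (fun C hC => (hcomps C hC).2) 0 r R⟩

/-- Integral Geometry Sandwich, with homotopy type. -/
theorem stmt_1 {d ℓ : ℕ} (y : Fin ℓ → Euc d) (s : ℝ) (hs : 0 < s)
    (hnd : Nondeg y s) (Z : Type*) [TopologicalSpace Z]
    (r R : ℝ) (hr : 0 < r) (hrR : r < R) :
    (∫ x in ball (0 : Euc d) (R - r),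
        (compCountType (⋃ k, closedBall (y k) s) (ball x r) Z : ℝ)
          / (volume (ball (0 : Euc d) r)).toReal)
      ≤ (compCountType (⋃ k, closedBall (y k) s) (ball (0 : Euc d) R) Z : ℝ) ∧
    (compCountType (⋃ k, closedBall (y k) s) (ball (0 : Euc d) R) Z : ℝ)
      ≤ ∫ x in ball (0 : Euc d) (R + r),
          (compCountTypeStar (⋃ k, closedBall (y k) s) (ball x r) Z : ℝ)
            / (volume (ball (0 : Euc d) r)).toReal :=
  stmt_1_general y s Z r R hr
end

section
/- Let P ⊂ ℝ^d be a locally finite set, let 0 < α < r, let x ∈ ℝ^d, and set 𝒫 = ⋃_{p∈P} B̄(p, α). Then: (i) every connected component of 𝒫 that intersects B̄(x, r) but is not contained in the interior of B̄(x, r) contains a point p ∈ P with r − α ≤ ‖p − x‖ ≤ r + α; and consequently (ii) for every topological space Z, 𝒩*(𝒫, B̄(x, r); [Z]) ≤ 𝒩(𝒫, B̄(x, r); [Z]) + #{ p ∈ P : r − α ≤ ‖p − x‖ ≤ r + α }. -/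
open Metric MeasureTheory Filter Topology

/-!
A component `C` of `nbhd P α` that meets `B̄(x, r)` without lying in its interior is preconnected,
so by the intermediate value theorem applied to `dist · x` it contains a point `c` with
`dist c x = r`. The ball `B̄(p, α) ∋ c` with `p ∈ P` is connected and lies in `nbhd P α`, hence in
`C`, and the triangle inequality puts `p` in the annulus `r - α ≤ dist p x ≤ r + α`. Distinct
components are disjoint, so assigning such a `p` to each component counted by `𝒩*` but not by `𝒩`
is injective into the (finite) set of points of `P` in the annulus.
-/

theorem Set.PairwiseDisjoint.ncard_le_of_forall_inter_nonempty {X : Type*} {S : Set (Set X)}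
    {A : Set X} (hS : S.PairwiseDisjoint id) (hA : A.Finite)
    (hSA : ∀ C ∈ S, (C ∩ A).Nonempty) : S.ncard ≤ A.ncard := by
  rcases isEmpty_or_nonempty X with hX | hX
  · have hS_empty : S = ∅ :=
      Set.eq_empty_of_forall_notMem fun C hC => (hSA C hC).ne_empty (Set.eq_empty_of_isEmpty _)
    simp [hS_empty]
  choose! f hf using hSA
  refine Set.ncard_le_ncard_of_injOn f (fun C hC => (hf C hC).2) (fun C₁ h₁ C₂ h₂ he => ?_) hA
  exact hS.elim h₁ h₂ (Set.not_disjoint_iff.mpr ⟨f C₁, (hf C₁ h₁).1, he ▸ (hf C₂ h₂).1⟩)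

theorem IsPreconnected.exists_dist_eq {X : Type*} [PseudoMetricSpace X] {C : Set X} {x : X}
    {r : ℝ} (hC : IsPreconnected C) (hin : (C ∩ closedBall x r).Nonempty)
    (hout : ¬ C ⊆ ball x r) : ∃ c ∈ C, dist c x = r := by
  obtain ⟨a, haC, har⟩ := hin
  obtain ⟨b, hbC, hbr⟩ := Set.not_subset.mp hout
  exact hC.intermediate_value haC hbC (continuous_id.dist continuous_const).continuousOn
    ⟨mem_closedBall.mp har, le_of_not_gt hbr⟩

section Components

variable {d : ℕ} {Y C : Set (Euc d)}

theorem IsCompOf.nonempty_s14 (hC : IsCompOf Y C) : C.Nonempty := by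
  obtain ⟨y, hy, rfl⟩ := hC
  exact ⟨y, mem_connectedComponentIn hy⟩

theorem IsCompOf.isPreconnected (hC : IsCompOf Y C) : IsPreconnected C := by
  obtain ⟨y, -, rfl⟩ := hC
  exact isPreconnected_connectedComponentIn

theorem pairwiseDisjoint_isCompOf (Y : Set (Euc d)) :
    {C | IsCompOf Y C}.PairwiseDisjoint id := by
  rintro _ ⟨a, -, rfl⟩ _ ⟨b, -, rfl⟩ hne
  refine Set.disjoint_left.mpr fun z hza hzb => hne ?_
  rw [connectedComponentIn_eq hza, connectedComponentIn_eq hzb]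

theorem compCountTypeStar_le_compCountType_add {Y₂ A : Set (Euc d)} (Z : Type*)
    [TopologicalSpace Z] (hA : A.Finite)
    (hboundary : ∀ C, IsCompOf Y C → (C ∩ Y₂).Nonempty → ¬ C ⊆ interior Y₂ → (C ∩ A).Nonempty) :
    compCountTypeStar Y Y₂ Z ≤ compCountType Y Y₂ Z + A.ncard := by
  set S := {C | IsCompOf Y C ∧ C ⊆ interior Y₂ ∧ Nonempty (ContinuousMap.HomotopyEquiv C Z)}
  set T := {C | IsCompOf Y C ∧ (C ∩ Y₂).Nonempty ∧ Nonempty (ContinuousMap.HomotopyEquiv C Z)}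
  have hST : S ⊆ T := fun C ⟨hC, hsub, hZ⟩ =>
    ⟨hC, hC.nonempty_s14.mono (Set.subset_inter subset_rfl (hsub.trans interior_subset)), hZ⟩
  have hrest : (T \ S).ncard ≤ A.ncard := by
    refine ((pairwiseDisjoint_isCompOf Y).subset fun C hC => hC.1.1)
      |>.ncard_le_of_forall_inter_nonempty hA fun C ⟨⟨hC, hin, hZ⟩, hnS⟩ => ?_
    exact hboundary C hC hin fun hsub => hnS ⟨hC, hsub, hZ⟩
  calc T.ncard = (S ∪ T \ S).ncard := by rw [Set.union_sdiff_cancel hST]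
    _ ≤ S.ncard + (T \ S).ncard := Set.ncard_union_le S (T \ S)
    _ ≤ S.ncard + A.ncard := by omega

end Components

section Neighbourhood

variable {d : ℕ} {P C : Set (Euc d)} {α : ℝ}

theorem mem_nbhd {c : Euc d} : c ∈ nbhd P α ↔ ∃ p ∈ P, dist c p ≤ α := by
  simp [nbhd]

theorem closedBall_subset_nbhd {p : Euc d} (hp : p ∈ P) : closedBall p α ⊆ nbhd P α :=
  fun _ hz => mem_nbhd.mpr ⟨p, hp, hz⟩

theorem IsCompOf.exists_center_mem (hα : 0 ≤ α) (hC : IsCompOf (nbhd P α) C) {c : Euc d}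
    (hc : c ∈ C) : ∃ p ∈ P, p ∈ C ∧ dist c p ≤ α := by
  obtain ⟨y, -, rfl⟩ := hC
  obtain ⟨p, hp, hcp⟩ := mem_nbhd.mp (connectedComponentIn_subset _ _ hc)
  have hball : closedBall p α ⊆ connectedComponentIn (nbhd P α) c :=
    (convex_closedBall p α).isPreconnected.subset_connectedComponentIn (mem_closedBall.mpr hcp)
      (closedBall_subset_nbhd hp)
  rw [← connectedComponentIn_eq hc] at hball
  exact ⟨p, hp, hball (mem_closedBall_self hα), hcp⟩

theorem IsCompOf.exists_mem_annulus (hα : 0 ≤ α) (hC : IsCompOf (nbhd P α) C) {x : Euc d}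
    {r : ℝ} (hin : (C ∩ closedBall x r).Nonempty) (hout : ¬ C ⊆ interior (closedBall x r)) :
    ∃ p ∈ P, p ∈ C ∧ r - α ≤ dist p x ∧ dist p x ≤ r + α := by
  obtain ⟨c, hcC, hcx⟩ :=
    hC.isPreconnected.exists_dist_eq hin fun h => hout (h.trans ball_subset_interior_closedBall)
  obtain ⟨p, hp, hpC, hcp⟩ := hC.exists_center_mem hα hcC
  refine ⟨p, hp, hpC, ?_, ?_⟩ <;> linarith [dist_triangle c p x, dist_triangle p c x, dist_comm c p]

end Neighbourhood

theorem stmt_14_general {d : ℕ} (P : Set (Euc d))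
    (hP : ∀ s : Set (Euc d), Bornology.IsBounded s → (P ∩ s).Finite)
    (α r : ℝ) (hα : 0 < α) (x : Euc d)
    (Z : Type*) [TopologicalSpace Z] :
    (∀ C : Set (Euc d), IsCompOf (nbhd P α) C → (C ∩ closedBall x r).Nonempty →
      ¬ C ⊆ interior (closedBall x r) →
      ∃ p ∈ P, p ∈ C ∧ r - α ≤ dist p x ∧ dist p x ≤ r + α) ∧
    compCountTypeStar (nbhd P α) (closedBall x r) Z ≤
      compCountType (nbhd P α) (closedBall x r) Z +
        {p ∈ P | r - α ≤ dist p x ∧ dist p x ≤ r + α}.ncard := by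
  have hfinite : {p ∈ P | r - α ≤ dist p x ∧ dist p x ≤ r + α}.Finite :=
    (hP (closedBall x (r + α)) isBounded_closedBall).subset
      fun p hp => ⟨hp.1, mem_closedBall.mpr hp.2.2⟩
  refine ⟨fun C hC => hC.exists_mem_annulus hα.le,
    compCountTypeStar_le_compCountType_add Z hfinite fun C hC hin hout => ?_⟩
  obtain ⟨p, hp, hpC, hpx⟩ := hC.exists_mem_annulus hα.le hin hout
  exact ⟨p, hpC, hp, hpx⟩

/-- Components of the Boolean model meeting `B̄(x,r)` but not contained in
its interior contain a point of `P` in the annulus `r - α ≤ ‖p - x‖ ≤ r + α`; consequently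
the boundary count `𝒩*` exceeds `𝒩` by at most the number of points of `P` in that annulus. -/
theorem stmt_14 {d : ℕ} (P : Set (Euc d))
    (hP : ∀ s : Set (Euc d), Bornology.IsBounded s → (P ∩ s).Finite)
    (α r : ℝ) (hα : 0 < α) (hαr : α < r) (x : Euc d)
    (Z : Type*) [TopologicalSpace Z] :
    (∀ C : Set (Euc d), IsCompOf (nbhd P α) C → (C ∩ closedBall x r).Nonempty →
      ¬ C ⊆ interior (closedBall x r) →
      ∃ p ∈ P, p ∈ C ∧ r - α ≤ dist p x ∧ dist p x ≤ r + α) ∧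
    compCountTypeStar (nbhd P α) (closedBall x r) Z ≤
      compCountType (nbhd P α) (closedBall x r) Z +
        {p ∈ P | r - α ≤ dist p x ∧ dist p x ≤ r + α}.ncard :=
  stmt_14_general P hP α r hα x Z
end
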